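/- arXiv:0901.4880 — 3 statements merged into one kernel-verified Lean document; each statement's English description precedes it below -/
import Mathlib

section
/- For the equal mitosis equation with B > 0 and any ϱ > 0, the solution with initial condition n⁰ = ϱN + ξ, where ξ(x) = (1/2)N'(x/2), is n(x,t) = ϱN(x) + e^{-Bt} ξ(x), and it satisfies ∫₀^∞ |n(x,t) - ϱN(x)| dx = e^{-Bt} ∫₀^∞ |ξ(x)| dx; hence the decay rate e^{-(k-1)Bt} = e^{-Bt} is attained. -/
open MeasureTheory Set Filter

/-!
Differentiating the steady-state equation `N' + 2BN = 4BN(2·)` shows that `N'` satisfies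
`N'' + 2BN' = 8BN'(2·)`, which after the substitution `x ↦ x/2` says that
`ξ = (1/2)N'(·/2)` is an eigenfunction of the mitosis operator `-∂ₓ - 2B + 4B(2·)` with
eigenvalue `-B`. Hence `ϱN + e^{-Bt}ξ` is an exact solution, and its distance to `ϱN`
is `e^{-Bt}|ξ|` pointwise.
-/

section EqualMitosis

variable {B : ℝ} {N Nd Ndd : ℝ → ℝ}

theorem mitosis_steady_deriv_eq (hNd : ∀ x, HasDerivAt N (Nd x) x)
    (hNdd : ∀ x, HasDerivAt Nd (Ndd x) x)
    (hNeq : ∀ x > (0:ℝ), Nd x + 2 * B * N x = 4 * B * N (2 * x)) {y : ℝ} (hy : 0 < y) :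
    Ndd y + 2 * B * Nd y = 8 * B * Nd (2 * y) := by
  have hN2 : HasDerivAt (fun z => N (2 * z)) (Nd (2 * y) * 2) y :=
    (hNd (2 * y)).comp y (hasDerivAt_const_mul 2)
  have hderiv : HasDerivAt (fun z => Nd z + 2 * B * N z - 4 * B * N (2 * z))
      (Ndd y + 2 * B * Nd y - 4 * B * (Nd (2 * y) * 2)) y :=
    ((hNdd y).add ((hNd y).const_mul (2 * B))).sub (hN2.const_mul (4 * B))
  have hvanish : (fun z => Nd z + 2 * B * N z - 4 * B * N (2 * z)) =ᶠ[nhds y] fun _ => 0 := by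
    filter_upwards [eventually_gt_nhds hy] with z hz
    linarith [hNeq z hz]
  have := hderiv.unique ((hasDerivAt_const y 0).congr_of_eventuallyEq hvanish)
  linarith

theorem mitosis_eigenfunction_eq (hNd : ∀ x, HasDerivAt N (Nd x) x)
    (hNdd : ∀ x, HasDerivAt Nd (Ndd x) x)
    (hNeq : ∀ x > (0:ℝ), Nd x + 2 * B * N x = 4 * B * N (2 * x)) {x : ℝ} (hx : 0 < x) :
    -B * ((1 / 2) * Nd (x / 2)) + (1 / 4) * Ndd (x / 2) + 2 * B * ((1 / 2) * Nd (x / 2))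
      = 4 * B * ((1 / 2) * Nd x) := by
  have h := mitosis_steady_deriv_eq hNd hNdd hNeq (half_pos hx)
  rw [mul_div_cancel₀ x two_ne_zero] at h
  linear_combination (1 / 4 : ℝ) * h

end EqualMitosis

theorem setIntegral_abs_add_const_mul_sub {α : Type*} [MeasurableSpace α] {μ : Measure α}
    {s : Set α} (g f : α → ℝ) {c : ℝ} (hc : 0 ≤ c) :
    ∫ x in s, |(g x + c * f x) - g x| ∂μ = c * ∫ x in s, |f x| ∂μ := by
  simp_rw [add_sub_cancel_left, abs_mul, abs_of_nonneg hc]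
  exact integral_const_mul c _

theorem stmt_12_general (B ϱ : ℝ) (N Nd Ndd : ℝ → ℝ)
    (hN0 : N 0 = 0)
    (hNd : ∀ x : ℝ, HasDerivAt N (Nd x) x)
    (hNdd : ∀ x : ℝ, HasDerivAt Nd (Ndd x) x)
    (hNeq : ∀ x > (0:ℝ), Nd x + 2 * B * N x = 4 * B * N (2 * x)) :
    -- `n(·,0)` is the prescribed initial condition
    (∀ x : ℝ, ϱ * N x + Real.exp (-B * 0) * ((1 / 2) * Nd (x / 2))
      = ϱ * N x + (1 / 2) * Nd (x / 2)) ∧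
    -- boundary condition
    (∀ t : ℝ, ϱ * N 0 + Real.exp (-B * t) * ((1 / 2) * Nd (0 / 2))
      = Real.exp (-B * t) * ((1 / 2) * Nd 0)) ∧
    -- `n(x,t) = ϱN(x) + e^{-Bt}ξ(x)` solves the equal mitosis equation
    (∀ x > (0:ℝ), ∀ t : ℝ,
      HasDerivAt (fun s => ϱ * N x + Real.exp (-B * s) * ((1 / 2) * Nd (x / 2)))
        (-B * (Real.exp (-B * t) * ((1 / 2) * Nd (x / 2)))) t ∧
      HasDerivAt (fun z => ϱ * N z + Real.exp (-B * t) * ((1 / 2) * Nd (z / 2)))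
        (ϱ * Nd x + Real.exp (-B * t) * ((1 / 4) * Ndd (x / 2))) x ∧
      (-B * (Real.exp (-B * t) * ((1 / 2) * Nd (x / 2))))
          + (ϱ * Nd x + Real.exp (-B * t) * ((1 / 4) * Ndd (x / 2)))
          + 2 * B * (ϱ * N x + Real.exp (-B * t) * ((1 / 2) * Nd (x / 2)))
        = 4 * B * (ϱ * N (2 * x) + Real.exp (-B * t) * ((1 / 2) * Nd ((2 * x) / 2)))) ∧
    -- the L¹-distance to equilibrium decays exactly like `e^{-Bt}`
    (∀ t : ℝ, (∫ x in Set.Ioi (0:ℝ),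
        |(ϱ * N x + Real.exp (-B * t) * ((1 / 2) * Nd (x / 2))) - ϱ * N x|)
      = Real.exp (-B * t) * ∫ x in Set.Ioi (0:ℝ), |(1 / 2) * Nd (x / 2)|) := by
  refine ⟨fun x => by simp, fun t => by simp [hN0], fun x hx t => ⟨?_, ?_, ?_⟩,
    fun t => setIntegral_abs_add_const_mul_sub _ _ (Real.exp_pos _).le⟩
  · have hexp : HasDerivAt (fun s => Real.exp (-B * s)) (Real.exp (-B * t) * -B) t := by
      simpa using ((hasDerivAt_id t).const_mul (-B)).exp
    exact ((hexp.mul_const ((1 / 2) * Nd (x / 2))).const_add (ϱ * N x)).congr_deriv (by ring)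
  · have hξ : HasDerivAt (fun z => (1 / 2) * Nd (z / 2)) ((1 / 4) * Ndd (x / 2)) x := by
      exact (((hNdd (x / 2)).comp x ((hasDerivAt_id x).div_const 2)).const_mul
        (1 / 2 : ℝ)).congr_deriv (by ring)
    exact ((hNd x).const_mul ϱ).add (hξ.const_mul (Real.exp (-B * t)))
  · rw [mul_div_cancel_left₀ x two_ne_zero]
    linear_combination ϱ * hNeq x hx
      + Real.exp (-B * t) * mitosis_eigenfunction_eq hNd hNdd hNeq hx

/-- Equal mitosis optimality: with `ξ(x) = (1/2)N'(x/2)`, the function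
`n(x,t) = ϱN(x) + e^{-Bt}ξ(x)` is the solution of the equal mitosis equation
with initial condition `n⁰ = ϱN + ξ`, and
`∫₀^∞ |n(x,t) - ϱN(x)| dx = e^{-Bt} ∫₀^∞ |ξ(x)| dx`, so the decay rate
`e^{-(k-1)Bt} = e^{-Bt}` is attained. -/
theorem stmt_12 (B ϱ : ℝ) (hB : 0 < B) (hϱ : 0 < ϱ) (N Nd Ndd : ℝ → ℝ)
    (hN0 : N 0 = 0) (hNpos : ∀ x > (0:ℝ), 0 < N x)
    (hNint : (∫ x in Set.Ioi (0:ℝ), N x) = 1)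
    (hNd : ∀ x : ℝ, HasDerivAt N (Nd x) x)
    (hNdd : ∀ x : ℝ, HasDerivAt Nd (Ndd x) x)
    (hNeq : ∀ x > (0:ℝ), Nd x + 2 * B * N x = 4 * B * N (2 * x))
    (hξint : IntegrableOn (fun x => (1 / 2) * Nd (x / 2)) (Set.Ioi 0)) :
    -- `n(·,0)` is the prescribed initial condition
    (∀ x : ℝ, ϱ * N x + Real.exp (-B * 0) * ((1 / 2) * Nd (x / 2))
      = ϱ * N x + (1 / 2) * Nd (x / 2)) ∧
    -- boundary condition
    (∀ t : ℝ, ϱ * N 0 + Real.exp (-B * t) * ((1 / 2) * Nd (0 / 2))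
      = Real.exp (-B * t) * ((1 / 2) * Nd 0)) ∧
    -- `n(x,t) = ϱN(x) + e^{-Bt}ξ(x)` solves the equal mitosis equation
    (∀ x > (0:ℝ), ∀ t : ℝ,
      HasDerivAt (fun s => ϱ * N x + Real.exp (-B * s) * ((1 / 2) * Nd (x / 2)))
        (-B * (Real.exp (-B * t) * ((1 / 2) * Nd (x / 2)))) t ∧
      HasDerivAt (fun z => ϱ * N z + Real.exp (-B * t) * ((1 / 2) * Nd (z / 2)))
        (ϱ * Nd x + Real.exp (-B * t) * ((1 / 4) * Ndd (x / 2))) x ∧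
      (-B * (Real.exp (-B * t) * ((1 / 2) * Nd (x / 2))))
          + (ϱ * Nd x + Real.exp (-B * t) * ((1 / 4) * Ndd (x / 2)))
          + 2 * B * (ϱ * N x + Real.exp (-B * t) * ((1 / 2) * Nd (x / 2)))
        = 4 * B * (ϱ * N (2 * x) + Real.exp (-B * t) * ((1 / 2) * Nd ((2 * x) / 2)))) ∧
    -- the L¹-distance to equilibrium decays exactly like `e^{-Bt}`
    (∀ t : ℝ, (∫ x in Set.Ioi (0:ℝ),
        |(ϱ * N x + Real.exp (-B * t) * ((1 / 2) * Nd (x / 2))) - ϱ * N x|)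
      = Real.exp (-B * t) * ∫ x in Set.Ioi (0:ℝ), |(1 / 2) * Nd (x / 2)|) :=
  stmt_12_general B ϱ N Nd Ndd hN0 hNd hNdd hNeq
end

section
/- For the uniform fragmentation equation (κ(x,y) = 2/y for x ≤ y, k = 2), the function N(x) = 4B²x e^{-2Bx} is the steady state: it satisfies N'(x) + 2BN(x) = 2B∫_x^∞ N(y)/y dy, N(0) = 0, N > 0 on (0,∞), and ∫₀^∞ N(x) dx = 1. -/
/-! Dividing by `y`, the fragmentation integral of `N` becomes `4B²∫ₓ^∞ e^{-2By} dy`, which is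
explicit and matches `N' + 2BN = 4B² e^{-2Bx}`; the normalisation is the Gamma integral
`∫₀^∞ y e^{-cy} dy = Γ(2) / c²` with `c = 2B`. -/

open MeasureTheory Set Real

theorem hasDerivAt_const_mul_mul_exp_neg_mul (a c x : ℝ) :
    HasDerivAt (fun z => a * z * exp (-(c * z))) (a * (1 - c * x) * exp (-(c * x))) x := by
  have hexp : HasDerivAt (fun z => exp (-(c * z))) (exp (-(c * x)) * -(c * 1)) x :=
    ((hasDerivAt_id x).const_mul c).neg.exp
  exact (((hasDerivAt_id x).const_mul a).mul hexp).congr_deriv (by simp only [id_eq]; ring)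

theorem integral_mul_exp_neg_mul_Ioi_zero {c : ℝ} (hc : 0 < c) :
    ∫ t in Ioi (0 : ℝ), t * exp (-(c * t)) = 1 / c ^ 2 := by
  have h := integral_rpow_mul_exp_neg_mul_Ioi (a := 2) two_pos hc
  norm_num [Gamma_two] at h
  rwa [one_div]

theorem integral_exp_neg_mul_Ioi {c : ℝ} (hc : 0 < c) (x : ℝ) :
    ∫ y in Ioi x, exp (-(c * y)) = exp (-(c * x)) / c := by
  have h := integral_exp_mul_Ioi (neg_neg_of_pos hc) x
  simp only [neg_mul] at h
  rw [h, neg_div, div_neg, neg_neg]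

/-- For uniform fragmentation, `N(x) = 4B²x e^{-2Bx}` is the normalized
steady state: `N' + 2BN = 2B∫ₓ^∞ N(y)/y dy`, `N(0) = 0`, `N > 0` on `(0,∞)`,
`∫₀^∞ N = 1`. -/
theorem stmt_13 (B : ℝ) (hB : 0 < B) :
    (4 * B ^ 2 * 0 * Real.exp (-(2 * B * 0)) = 0) ∧
    (∀ x > (0:ℝ), 0 < 4 * B ^ 2 * x * Real.exp (-(2 * B * x))) ∧
    ((∫ x in Set.Ioi (0:ℝ), 4 * B ^ 2 * x * Real.exp (-(2 * B * x))) = 1) ∧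
    (∀ x > (0:ℝ),
      HasDerivAt (fun z => 4 * B ^ 2 * z * Real.exp (-(2 * B * z)))
        (4 * B ^ 2 * (1 - 2 * B * x) * Real.exp (-(2 * B * x))) x ∧
      4 * B ^ 2 * (1 - 2 * B * x) * Real.exp (-(2 * B * x))
          + 2 * B * (4 * B ^ 2 * x * Real.exp (-(2 * B * x)))
        = 2 * B * ∫ y in Set.Ioi x, (4 * B ^ 2 * y * Real.exp (-(2 * B * y))) / y) := by
  have hc : 0 < 2 * B := by positivity
  refine ⟨by ring, fun x hx => by positivity, ?_, fun x hx => ⟨?_, ?_⟩⟩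
  · simp_rw [mul_assoc (4 * B ^ 2)]
    rw [integral_const_mul, integral_mul_exp_neg_mul_Ioi_zero hc]
    field_simp
    ring
  · exact hasDerivAt_const_mul_mul_exp_neg_mul _ _ x
  · have hdiv : ∫ y in Ioi x, 4 * B ^ 2 * y * exp (-(2 * B * y)) / y
        = ∫ y in Ioi x, 4 * B ^ 2 * exp (-(2 * B * y)) :=
      setIntegral_congr_fun measurableSet_Ioi fun y (hy : x < y) => by
        field_simp [(hx.trans hy).ne']
    rw [hdiv, integral_const_mul, integral_exp_neg_mul_Ioi hc]
    field_simp
    ring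
end

section
/- For uniform fragmentation with B > 0 and ϱ > 0, n(x,t) = ϱ·4B²x e^{-2Bx} + e^{-Bt}·x(Bx-2)e^{-Bx} solves the uniform fragmentation equation with initial condition n⁰(x) = 4ϱB²xe^{-2Bx} + x(Bx-2)e^{-Bx}, and ∫₀^∞ |n(x,t) - ϱN(x)| dx = e^{-Bt}∫₀^∞ |x(Bx-2)e^{-Bx}| dx, showing optimality of the rate (k-1)B = B. -/
/-!
The equation is linear, so it suffices that `N` is a stationary solution and that `η` is an
eigenfunction of the fragmentation operator with eigenvalue `-B`, i.e.
`η' + B η = 2B ∫ₓ^∞ η(y)/y dy`. Both `N(y)/y` and `η(y)/y` are affine functions times a decaying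
exponential, whose tails integrate in closed form. The `L¹` identity is immediate, since
`n - ϱN = e^{-Bt} η`.
-/

open MeasureTheory Set Filter Real

lemma hasDerivAt_exp_neg_mul (c y : ℝ) :
    HasDerivAt (fun y => exp (-(c * y))) (-c * exp (-(c * y))) y := by
  convert ((hasDerivAt_id y).const_mul c).neg.exp using 1 <;> simp [mul_comm]

lemma tendsto_affine_mul_exp_neg_mul_atTop {c : ℝ} (hc : 0 < c) (a b : ℝ) :
    Tendsto (fun y => (a * y + b) * exp (-(c * y))) atTop (nhds 0) := by
  have h₁ := tendsto_rpow_mul_exp_neg_mul_atTop_nhds_zero 1 c hc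
  have h₀ := tendsto_rpow_mul_exp_neg_mul_atTop_nhds_zero 0 c hc
  convert (h₁.const_mul a).add (h₀.const_mul b) using 2 with y
  · simp only [rpow_one, rpow_zero, neg_mul]
    ring
  · simp

lemma integrableOn_Ioi_affine_mul_exp_neg_mul {c : ℝ} (hc : 0 < c) (a b x : ℝ) :
    IntegrableOn (fun y => (a * y + b) * exp (-(c * y))) (Ioi x) := by
  refine integrable_of_isBigO_exp_neg (half_pos hc) (by fun_prop) ?_
  have hbound := (tendsto_affine_mul_exp_neg_mul_atTop (half_pos hc) a b).isBigO_one ℝ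
  refine (hbound.mul (Asymptotics.isBigO_refl (fun y => exp (-(c / 2) * y)) atTop)).congr
    (fun y => ?_) (fun y => one_mul _)
  rw [mul_assoc, ← exp_add]
  ring_nf

lemma integral_Ioi_affine_mul_exp_neg_mul {c : ℝ} (hc : 0 < c) (a b x : ℝ) :
    ∫ y in Ioi x, (a * y + b) * exp (-(c * y))
      = ((a * x + b) / c + a / c ^ 2) * exp (-(c * x)) := by
  have hderiv : ∀ y ∈ Ici x, HasDerivAt (fun y => -((a / c * y + (b / c + a / c ^ 2))
      * exp (-(c * y)))) ((a * y + b) * exp (-(c * y))) y := by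
    intro y _
    refine ((((hasDerivAt_id' y).const_mul (a / c)).add_const (b / c + a / c ^ 2)).fun_mul
      (hasDerivAt_exp_neg_mul c y)).fun_neg.congr_deriv ?_
    field_simp
    ring
  have hlim := (tendsto_affine_mul_exp_neg_mul_atTop hc (a / c) (b / c + a / c ^ 2)).neg
  rw [neg_zero] at hlim
  rw [integral_Ioi_of_hasDerivAt_of_tendsto' hderiv
    (integrableOn_Ioi_affine_mul_exp_neg_mul hc a b x) hlim]
  field_simp
  ring

namespace UniformFragmentation

noncomputable def steadyState (B x : ℝ) : ℝ := 4 * B ^ 2 * x * exp (-(2 * B * x))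

noncomputable def perturbation (B x : ℝ) : ℝ := x * (B * x - 2) * exp (-(B * x))

variable (B : ℝ)

lemma hasDerivAt_steadyState (x : ℝ) :
    HasDerivAt (steadyState B) (4 * B ^ 2 * (1 - 2 * B * x) * exp (-(2 * B * x))) x := by
  refine (((hasDerivAt_id' x).const_mul (4 * B ^ 2)).fun_mul
    (hasDerivAt_exp_neg_mul (2 * B) x)).congr_deriv ?_
  ring

lemma hasDerivAt_perturbation (x : ℝ) :
    HasDerivAt (perturbation B) ((-(B ^ 2) * x ^ 2 + 4 * B * x - 2) * exp (-(B * x))) x := by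
  refine (((hasDerivAt_id' x).fun_mul (((hasDerivAt_id' x).const_mul B).sub_const 2)).fun_mul
    (hasDerivAt_exp_neg_mul B x)).congr_deriv ?_
  ring

lemma steadyState_div {y : ℝ} (hy : y ≠ 0) :
    steadyState B y / y = (0 * y + 4 * B ^ 2) * exp (-(2 * B * y)) := by
  rw [steadyState]
  field_simp
  ring

lemma perturbation_div {y : ℝ} (hy : y ≠ 0) :
    perturbation B y / y = (B * y + -2) * exp (-(B * y)) := by
  rw [perturbation]
  field_simp
  ring

variable {B}

lemma integrableOn_Ioi_steadyState_div (hB : 0 < B) {x : ℝ} (hx : 0 ≤ x) :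
    IntegrableOn (fun y => steadyState B y / y) (Ioi x) :=
  (integrableOn_Ioi_affine_mul_exp_neg_mul (by positivity) _ _ x).congr_fun
    (fun _ hy => (steadyState_div B (hx.trans_lt hy).ne').symm) measurableSet_Ioi

lemma integrableOn_Ioi_perturbation_div (hB : 0 < B) {x : ℝ} (hx : 0 ≤ x) :
    IntegrableOn (fun y => perturbation B y / y) (Ioi x) :=
  (integrableOn_Ioi_affine_mul_exp_neg_mul hB _ _ x).congr_fun
    (fun _ hy => (perturbation_div B (hx.trans_lt hy).ne').symm) measurableSet_Ioi

lemma integral_Ioi_steadyState_div (hB : 0 < B) {x : ℝ} (hx : 0 ≤ x) :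
    ∫ y in Ioi x, steadyState B y / y = 2 * B * exp (-(2 * B * x)) := by
  rw [setIntegral_congr_fun measurableSet_Ioi
      (fun _ hy => steadyState_div B (hx.trans_lt hy).ne'),
    integral_Ioi_affine_mul_exp_neg_mul (by positivity)]
  field_simp
  ring

lemma integral_Ioi_perturbation_div (hB : 0 < B) {x : ℝ} (hx : 0 ≤ x) :
    ∫ y in Ioi x, perturbation B y / y = (x - 1 / B) * exp (-(B * x)) := by
  rw [setIntegral_congr_fun measurableSet_Ioi
      (fun _ hy => perturbation_div B (hx.trans_lt hy).ne'),
    integral_Ioi_affine_mul_exp_neg_mul hB]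
  field_simp
  ring

lemma integral_Ioi_steadyState_add_perturbation_div (hB : 0 < B) {x : ℝ} (hx : 0 ≤ x)
    (ϱ e : ℝ) :
    ∫ y in Ioi x, (ϱ * steadyState B y + e * perturbation B y) / y
      = ϱ * (2 * B * exp (-(2 * B * x))) + e * ((x - 1 / B) * exp (-(B * x))) := by
  simp_rw [add_div, mul_div_assoc]
  rw [integral_add ((integrableOn_Ioi_steadyState_div hB hx).const_mul ϱ)
      ((integrableOn_Ioi_perturbation_div hB hx).const_mul e),
    integral_const_mul, integral_const_mul, integral_Ioi_steadyState_div hB hx,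
    integral_Ioi_perturbation_div hB hx]

end UniformFragmentation

open UniformFragmentation

theorem stmt_15_general (B ϱ : ℝ) (hB : 0 < B) :
    -- initial condition
    (∀ x : ℝ, ϱ * (4 * B ^ 2 * x * Real.exp (-(2 * B * x)))
        + Real.exp (-(B * 0)) * (x * (B * x - 2) * Real.exp (-(B * x)))
      = 4 * ϱ * B ^ 2 * x * Real.exp (-(2 * B * x))
        + x * (B * x - 2) * Real.exp (-(B * x))) ∧
    -- boundary condition
    (∀ t : ℝ, ϱ * (4 * B ^ 2 * 0 * Real.exp (-(2 * B * 0)))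
        + Real.exp (-(B * t)) * ((0:ℝ) * (B * 0 - 2) * Real.exp (-(B * 0))) = 0) ∧
    -- `n` solves `∂ₜn + ∂ₓn + 2Bn = 2B∫ₓ^∞ n(y,t)/y dy`
    (∀ x > (0:ℝ), ∀ t : ℝ,
      HasDerivAt (fun s => ϱ * (4 * B ^ 2 * x * Real.exp (-(2 * B * x)))
          + Real.exp (-(B * s)) * (x * (B * x - 2) * Real.exp (-(B * x))))
        (-B * (Real.exp (-(B * t)) * (x * (B * x - 2) * Real.exp (-(B * x))))) t ∧
      HasDerivAt (fun z => ϱ * (4 * B ^ 2 * z * Real.exp (-(2 * B * z)))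
          + Real.exp (-(B * t)) * (z * (B * z - 2) * Real.exp (-(B * z))))
        (ϱ * (4 * B ^ 2 * (1 - 2 * B * x) * Real.exp (-(2 * B * x)))
          + Real.exp (-(B * t)) * ((-(B ^ 2) * x ^ 2 + 4 * B * x - 2)
              * Real.exp (-(B * x)))) x ∧
      (-B * (Real.exp (-(B * t)) * (x * (B * x - 2) * Real.exp (-(B * x)))))
          + (ϱ * (4 * B ^ 2 * (1 - 2 * B * x) * Real.exp (-(2 * B * x)))
            + Real.exp (-(B * t)) * ((-(B ^ 2) * x ^ 2 + 4 * B * x - 2)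
                * Real.exp (-(B * x))))
          + 2 * B * (ϱ * (4 * B ^ 2 * x * Real.exp (-(2 * B * x)))
            + Real.exp (-(B * t)) * (x * (B * x - 2) * Real.exp (-(B * x))))
        = 2 * B * ∫ y in Set.Ioi x,
            (ϱ * (4 * B ^ 2 * y * Real.exp (-(2 * B * y)))
              + Real.exp (-(B * t)) * (y * (B * y - 2) * Real.exp (-(B * y)))) / y) ∧
    -- exact exponential decay of the L¹-distance to equilibrium
    (∀ t : ℝ, (∫ x in Set.Ioi (0:ℝ),
        |(ϱ * (4 * B ^ 2 * x * Real.exp (-(2 * B * x)))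
            + Real.exp (-(B * t)) * (x * (B * x - 2) * Real.exp (-(B * x))))
          - ϱ * (4 * B ^ 2 * x * Real.exp (-(2 * B * x)))|)
      = Real.exp (-(B * t))
        * ∫ x in Set.Ioi (0:ℝ), |x * (B * x - 2) * Real.exp (-(B * x))|) := by
  have steadyState_def (x : ℝ) : 4 * B ^ 2 * x * exp (-(2 * B * x)) = steadyState B x := rfl
  have perturbation_def (x : ℝ) : x * (B * x - 2) * exp (-(B * x)) = perturbation B x := rfl
  simp only [steadyState_def, perturbation_def]
  refine ⟨fun x => ?_, fun t => by simp [steadyState, perturbation], fun x hx t => ⟨?_, ?_, ?_⟩,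
    fun t => ?_⟩
  · rw [mul_zero, neg_zero, exp_zero, one_mul, steadyState]
    ring
  · exact (((hasDerivAt_exp_neg_mul B t).mul_const _).const_add _).congr_deriv (mul_assoc ..)
  · exact ((hasDerivAt_steadyState B x).const_mul ϱ).add
      ((hasDerivAt_perturbation B x).const_mul _)
  · rw [integral_Ioi_steadyState_add_perturbation_div hB hx.le, steadyState, perturbation]
    field_simp
    ring
  · simp only [add_sub_cancel_left, abs_mul, abs_of_pos (exp_pos _)]
    exact integral_const_mul _ _

/-- Uniform fragmentation optimality: with `N(x) = 4B²xe^{-2Bx}` and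
`η(x) = x(Bx-2)e^{-Bx}`, the function `n(x,t) = ϱN(x) + e^{-Bt}η(x)` solves
the uniform fragmentation equation with initial condition `n⁰ = ϱN + η`, and
`∫₀^∞ |n(x,t) - ϱN(x)| dx = e^{-Bt}∫₀^∞ |η(x)| dx`, showing optimality of
the rate `(k-1)B = B`. -/
theorem stmt_15 (B ϱ : ℝ) (hB : 0 < B) (hϱ : 0 < ϱ) :
    -- initial condition
    (∀ x : ℝ, ϱ * (4 * B ^ 2 * x * Real.exp (-(2 * B * x)))
        + Real.exp (-(B * 0)) * (x * (B * x - 2) * Real.exp (-(B * x)))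
      = 4 * ϱ * B ^ 2 * x * Real.exp (-(2 * B * x))
        + x * (B * x - 2) * Real.exp (-(B * x))) ∧
    -- boundary condition
    (∀ t : ℝ, ϱ * (4 * B ^ 2 * 0 * Real.exp (-(2 * B * 0)))
        + Real.exp (-(B * t)) * ((0:ℝ) * (B * 0 - 2) * Real.exp (-(B * 0))) = 0) ∧
    -- `n` solves `∂ₜn + ∂ₓn + 2Bn = 2B∫ₓ^∞ n(y,t)/y dy`
    (∀ x > (0:ℝ), ∀ t : ℝ,
      HasDerivAt (fun s => ϱ * (4 * B ^ 2 * x * Real.exp (-(2 * B * x)))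
          + Real.exp (-(B * s)) * (x * (B * x - 2) * Real.exp (-(B * x))))
        (-B * (Real.exp (-(B * t)) * (x * (B * x - 2) * Real.exp (-(B * x))))) t ∧
      HasDerivAt (fun z => ϱ * (4 * B ^ 2 * z * Real.exp (-(2 * B * z)))
          + Real.exp (-(B * t)) * (z * (B * z - 2) * Real.exp (-(B * z))))
        (ϱ * (4 * B ^ 2 * (1 - 2 * B * x) * Real.exp (-(2 * B * x)))
          + Real.exp (-(B * t)) * ((-(B ^ 2) * x ^ 2 + 4 * B * x - 2)
              * Real.exp (-(B * x)))) x ∧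
      (-B * (Real.exp (-(B * t)) * (x * (B * x - 2) * Real.exp (-(B * x)))))
          + (ϱ * (4 * B ^ 2 * (1 - 2 * B * x) * Real.exp (-(2 * B * x)))
            + Real.exp (-(B * t)) * ((-(B ^ 2) * x ^ 2 + 4 * B * x - 2)
                * Real.exp (-(B * x))))
          + 2 * B * (ϱ * (4 * B ^ 2 * x * Real.exp (-(2 * B * x)))
            + Real.exp (-(B * t)) * (x * (B * x - 2) * Real.exp (-(B * x))))
        = 2 * B * ∫ y in Set.Ioi x,
            (ϱ * (4 * B ^ 2 * y * Real.exp (-(2 * B * y)))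
              + Real.exp (-(B * t)) * (y * (B * y - 2) * Real.exp (-(B * y)))) / y) ∧
    -- exact exponential decay of the L¹-distance to equilibrium
    (∀ t : ℝ, (∫ x in Set.Ioi (0:ℝ),
        |(ϱ * (4 * B ^ 2 * x * Real.exp (-(2 * B * x)))
            + Real.exp (-(B * t)) * (x * (B * x - 2) * Real.exp (-(B * x))))
          - ϱ * (4 * B ^ 2 * x * Real.exp (-(2 * B * x)))|)
      = Real.exp (-(B * t))
        * ∫ x in Set.Ioi (0:ℝ), |x * (B * x - 2) * Real.exp (-(B * x))|) :=
  stmt_15_general B ϱ hB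
end
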